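/- arXiv:2401.10676 — 2 statements merged into one kernel-verified Lean document; each statement's English description precedes it below -/
import Mathlib

section
/- Let ε > 0, let N ≥ 1 be an integer, and let x be a strictly ordered particle solution on [0,∞). Then for every t ≥ 0 the entropy identity holds: ∫_ℝ ρ^N(x,t)·log ρ^N(x,t) dx − ∫₀ᵗ ∫_ℝ ρ^N(x,τ)·(1/ε²)·( W_ε ∗ ρ^N(x,τ) − ρ^N(x,τ) ) dx dτ = ∫_ℝ ρ^N(x,0)·log ρ^N(x,0) dx, where the integrand ρ·log ρ is taken to vanish where ρ^N = 0. Moreover, for every t ≥ 0, ∫_ℝ ρ^N(x,t)·log ρ^N(x,t) dx ≤ ∫_ℝ ρ^N(x,0)·log ρ^N(x,0) dx. -/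
/-!
On a strictly ordered configuration the step density `ρ` has value `R_k = 1 / (N d_k)` on the
cell `I_k = [x_k, x_{k+1})`, so its entropy is `-(1/N) ∑ log (N d_k)` and the particle ODE gives
its time derivative in closed form. Integrating `W_ε` twice explicitly shows that
`∫ ρ (W_ε ∗ ρ - ρ) / ε² = ∑_{k,j} B_kj R_k R_j`, where `B_kj` is the mixed second difference of
`W_ε` over `I_k × I_j`, and the ODE shows that this is exactly the entropy derivative; the
identity follows by the fundamental theorem of calculus. The matrix `B` is symmetric, nonnegative
off the diagonal (on disjoint cells `W_ε` is a product of exponentials) and has nonpositive row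
sums (they telescope to the mixed difference over `I_k × [x_0, x_N]`, and `W_ε` decreases in
`|s|`), hence is negative semidefinite, which gives the decay of the entropy.
-/

open MeasureTheory Real Set
open scoped ENNReal

/-- Scaled Morse potential `W_ε(x) = (1/(2ε)) e^{-|x|/ε}`. -/
noncomputable def Morse (ε x : ℝ) : ℝ := (1 / (2 * ε)) * Real.exp (-|x| / ε)

/-- Derivative of the scaled Morse potential,
`W_ε'(x) = -(1/(2ε²)) sign(x) e^{-|x|/ε}`. -/
noncomputable def Morse' (ε x : ℝ) : ℝ :=
  -(1 / (2 * ε ^ 2)) * Real.sign x * Real.exp (-|x| / ε)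

/-- Right-hand side of the particle ODE system:
`(1/N) ∑_{k=0}^{N-1} (W_ε(x_{k+1}-x_i) - W_ε(x_k-x_i))/(x_{k+1}-x_k)`. -/
noncomputable def particleRHS (ε : ℝ) (N : ℕ) (x : ℕ → ℝ) (i : ℕ) : ℝ :=
  (1 / (N : ℝ)) * ∑ k ∈ Finset.range N,
    (Morse ε (x (k + 1) - x i) - Morse ε (x k - x i)) / (x (k + 1) - x k)

/-- A strictly ordered particle solution on `[0,∞)`:  a differentiable curve
`x = (x_0,…,x_N)` with `x_0(t) < ⋯ < x_N(t)` for all `t ≥ 0`, solving the particle ODE. -/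
def IsParticleSol (ε : ℝ) (N : ℕ) (x : ℝ → ℕ → ℝ) : Prop :=
  (∀ t : ℝ, 0 ≤ t → ∀ i < N, x t i < x t (i + 1)) ∧
  (∀ i ≤ N, ∀ t : ℝ, 0 ≤ t →
    HasDerivWithinAt (fun s => x s i) (particleRHS ε N (x t) i) (Set.Ici 0) t)

/-- The discrete (piecewise constant) density
`ρ^N(y,t) = ∑_{k=0}^{N-1} R_k(t) 1_{[x_k(t), x_{k+1}(t))}(y)` with `R_k = 1/(N d_k)`. -/
noncomputable def discDens (N : ℕ) (x : ℝ → ℕ → ℝ) (y t : ℝ) : ℝ :=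
  ∑ k ∈ Finset.range N,
    Set.indicator (Set.Ico (x t k) (x t (k + 1)))
      (fun _ => 1 / ((N : ℝ) * (x t (k + 1) - x t k))) y

/-- Convolution in the space variable: `(W ∗ ρ)(x) = ∫ W(x-y) ρ(y) dy`. -/
noncomputable def conv (W ρ : ℝ → ℝ) (x : ℝ) : ℝ := ∫ y, W (x - y) * ρ y

theorem hasDerivAt_of_eqOn_Iic_of_eqOn_Ici {F F' g h : ℝ → ℝ} {a : ℝ}
    (hFg : EqOn F g (Iic a)) (hFh : EqOn F h (Ici a))
    (hg : ∀ x ≤ a, HasDerivAt g (F' x) x) (hh : ∀ x ≥ a, HasDerivAt h (F' x) x) (x : ℝ) :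
    HasDerivAt F (F' x) x := by
  rcases lt_trichotomy x a with hx | rfl | hx
  · exact (hg x hx.le).congr_of_eventuallyEq <|
      Filter.eventuallyEq_of_mem (Iio_mem_nhds hx) fun y hy => hFg (mem_Iic.2 (le_of_lt hy))
  · have := ((hg x le_rfl).hasDerivWithinAt.congr hFg (hFg self_mem_Iic)).union
      ((hh x le_rfl).hasDerivWithinAt.congr hFh (hFh self_mem_Ici))
    rwa [Iic_union_Ici, hasDerivWithinAt_univ] at this
  · exact (hh x hx.le).congr_of_eventuallyEq <|
      Filter.eventuallyEq_of_mem (Ioi_mem_nhds hx) fun y hy => hFh (mem_Ici.2 (le_of_lt hy))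

theorem integral_eq_sub_of_hasDerivWithinAt_Ici {f f' : ℝ → ℝ} {a b : ℝ} (hab : a ≤ b)
    (hf : ∀ t, a ≤ t → HasDerivWithinAt f (f' t) (Ici a) t) (hf' : ContinuousOn f' (Ici a)) :
    ∫ t in a..b, f' t = f b - f a :=
  intervalIntegral.integral_eq_sub_of_hasDeriv_right_of_le hab
    (fun t ht => (hf t ht.1).continuousWithinAt.mono Icc_subset_Ici_self)
    (fun t ht => (hf t ht.1.le).mono (Ioi_subset_Ici_self.trans (Ici_subset_Ici.2 ht.1.le)))
    ((hf'.mono Icc_subset_Ici_self).intervalIntegrable_of_Icc hab)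

theorem exp_sub_div (p q ε : ℝ) : exp ((p - q) / ε) = exp (p / ε) * exp (-q / ε) := by
  rw [← exp_add]; ring_nf

theorem apply_sum_indicator_of_pairwiseDisjoint {ι α M P : Type*} [AddCommMonoid M]
    [AddCommMonoid P] {s : Finset ι} {S : ι → Set α} (hS : (s : Set ι).PairwiseDisjoint S)
    (f : ι → α → M) (φ : M → α → P) (hφ : ∀ y, φ 0 y = 0) (y : α) :
    φ (∑ k ∈ s, (S k).indicator (f k) y) y =
      ∑ k ∈ s, (S k).indicator (fun y => φ (f k y) y) y := by
  by_cases hy : ∃ j ∈ s, y ∈ S j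
  · obtain ⟨j, hj, hyj⟩ := hy
    have hout : ∀ k ∈ s, k ≠ j → y ∉ S k := fun k hk hkj hyk =>
      Set.disjoint_left.1 (hS hk hj hkj) hyk hyj
    rw [Finset.sum_eq_single_of_mem j hj fun k hk hkj => indicator_of_notMem (hout k hk hkj) _,
      Finset.sum_eq_single_of_mem j hj fun k hk hkj => indicator_of_notMem (hout k hk hkj) _,
      indicator_of_mem hyj, indicator_of_mem hyj]
  · push Not at hy
    rw [Finset.sum_eq_zero fun k hk => indicator_of_notMem (hy k hk) _,
      Finset.sum_eq_zero fun k hk => indicator_of_notMem (hy k hk) _, hφ]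

/-- Off the diagonal `2 B_kj R_k R_j ≤ B_kj (R_k² + R_j²)`, and by symmetry the right-hand side
sums to `2 ∑_k (∑_j B_kj) R_k²`. -/
theorem sum_sum_mul_mul_nonpos {ι : Type*} (s : Finset ι) {B : ι → ι → ℝ} (R : ι → ℝ)
    (hsymm : ∀ k ∈ s, ∀ j ∈ s, B k j = B j k)
    (hoff : ∀ k ∈ s, ∀ j ∈ s, j ≠ k → 0 ≤ B k j) (hrow : ∀ k ∈ s, ∑ j ∈ s, B k j ≤ 0) :
    ∑ k ∈ s, ∑ j ∈ s, B k j * R k * R j ≤ 0 := by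
  have hsq : ∑ k ∈ s, ∑ j ∈ s, B k j * R j ^ 2 = ∑ k ∈ s, ∑ j ∈ s, B k j * R k ^ 2 := by
    rw [Finset.sum_comm]
    exact Finset.sum_congr rfl fun k hk => Finset.sum_congr rfl fun j hj => by
      rw [hsymm j hj k hk]
  calc ∑ k ∈ s, ∑ j ∈ s, B k j * R k * R j
      ≤ ∑ k ∈ s, ∑ j ∈ s, (B k j * R k ^ 2 + B k j * R j ^ 2) / 2 := by
        refine Finset.sum_le_sum fun k hk => Finset.sum_le_sum fun j hj => ?_
        rcases eq_or_ne j k with rfl | hjk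
        · nlinarith
        · nlinarith [hoff k hk j hj hjk, mul_nonneg (hoff k hk j hj hjk) (sq_nonneg (R k - R j))]
    _ = ∑ k ∈ s, (∑ j ∈ s, B k j) * R k ^ 2 := by
        simp only [add_div, Finset.sum_add_distrib, ← Finset.sum_div, hsq, Finset.sum_mul]
        ring
    _ ≤ 0 := Finset.sum_nonpos fun k hk =>
        mul_nonpos_of_nonpos_of_nonneg (hrow k hk) (sq_nonneg _)

/-- `∫_a^b ∫_c^d f'' (y - z) dz dy`, also in the distributional sense for continuous `f`. -/
def mixedDiff (f : ℝ → ℝ) (a b c d : ℝ) : ℝ := f (b - c) - f (a - c) - f (b - d) + f (a - d)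

theorem mixedDiff_comm {f : ℝ → ℝ} (hf : ∀ s, f (-s) = f s) (a b c d : ℝ) :
    mixedDiff f a b c d = mixedDiff f c d a b := by
  simp only [mixedDiff, ← hf (b - c), ← hf (a - c), ← hf (b - d), ← hf (a - d), neg_sub]
  ring

theorem sum_range_mixedDiff (f : ℝ → ℝ) (a b : ℝ) (ξ : ℕ → ℝ) (n : ℕ) :
    ∑ j ∈ Finset.range n, mixedDiff f a b (ξ j) (ξ (j + 1)) = mixedDiff f a b (ξ 0) (ξ n) := by
  have := Finset.sum_range_sub' (fun j => f (b - ξ j) - f (a - ξ j)) n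
  convert this using 1
  · exact Finset.sum_congr rfl fun j _ => by unfold mixedDiff; ring
  · unfold mixedDiff; ring

theorem mixedDiff_abs_self {a b : ℝ} (hab : a ≤ b) :
    mixedDiff (|·|) a b a b = 2 * (b - a) := by
  simp only [mixedDiff, sub_self, abs_zero, abs_of_nonneg (sub_nonneg.2 hab),
    abs_of_nonpos (sub_nonpos.2 hab)]
  ring

theorem mixedDiff_abs_eq_zero {a b c d : ℝ} (hab : a ≤ b) (hcd : c ≤ d)
    (h : b ≤ c ∨ d ≤ a) : mixedDiff (|·|) a b c d = 0 := by
  wlog hbc : b ≤ c generalizing a b c d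
  · rw [mixedDiff_comm abs_neg]
    exact this hcd hab (Or.inl (h.resolve_left hbc)) (h.resolve_left hbc)
  simp only [mixedDiff, abs_of_nonpos (by linarith : b - c ≤ 0),
    abs_of_nonpos (by linarith : a - c ≤ 0), abs_of_nonpos (by linarith : b - d ≤ 0),
    abs_of_nonpos (by linarith : a - d ≤ 0)]
  ring

section Morse

variable {ε : ℝ}

theorem morse_of_nonneg {s : ℝ} (hs : 0 ≤ s) : Morse ε s = exp (-s / ε) / (2 * ε) := by
  rw [Morse, abs_of_nonneg hs]; ring

theorem morse_of_nonpos {s : ℝ} (hs : s ≤ 0) : Morse ε s = exp (s / ε) / (2 * ε) := by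
  rw [Morse, abs_of_nonpos hs, neg_neg]; ring

theorem morse_neg (s : ℝ) : Morse ε (-s) = Morse ε s := by
  rw [Morse, abs_neg, Morse]

theorem continuous_morse : Continuous (Morse ε) := by
  unfold Morse; fun_prop

theorem morse_le_morse (hε : 0 < ε) {s t : ℝ} (h : |t| ≤ |s|) : Morse ε s ≤ Morse ε t := by
  unfold Morse; gcongr

/-- Since `W_ε - ε² W_ε'' = δ`, primitives of `W_ε` and of its primitive are those of `δ`,
`sign / 2` and `|·| / 2`, plus `ε² W_ε'` and `ε² W_ε`. -/
noncomputable def morseAntideriv (ε s : ℝ) : ℝ := Real.sign s / 2 + ε ^ 2 * Morse' ε s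

noncomputable def morseAntideriv2 (ε s : ℝ) : ℝ := |s| / 2 + ε ^ 2 * Morse ε s

theorem morseAntideriv_of_nonneg (hε : 0 < ε) {s : ℝ} (hs : 0 ≤ s) :
    morseAntideriv ε s = (1 - exp (-s / ε)) / 2 := by
  rcases hs.eq_or_lt with rfl | hs
  · simp [morseAntideriv, Morse']
  · rw [morseAntideriv, Morse', Real.sign_of_pos hs, abs_of_pos hs]
    field_simp
    ring

theorem morseAntideriv_of_nonpos (hε : 0 < ε) {s : ℝ} (hs : s ≤ 0) :
    morseAntideriv ε s = (exp (s / ε) - 1) / 2 := by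
  rcases hs.eq_or_lt with rfl | hs
  · simp [morseAntideriv, Morse']
  · rw [morseAntideriv, Morse', Real.sign_of_neg hs, abs_of_neg hs, neg_neg]
    field_simp
    ring

theorem hasDerivAt_morseAntideriv (hε : 0 < ε) (s : ℝ) :
    HasDerivAt (morseAntideriv ε) (Morse ε s) s := by
  refine hasDerivAt_of_eqOn_Iic_of_eqOn_Ici (a := 0)
    (fun s hs => morseAntideriv_of_nonpos hε hs) (fun s hs => morseAntideriv_of_nonneg hε hs)
    (fun s hs => ?_) (fun s hs => ?_) s
  · rw [morse_of_nonpos hs]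
    refine ((((hasDerivAt_id' s).div_const ε).exp.sub_const 1).div_const 2).congr_deriv ?_
    field_simp
  · rw [morse_of_nonneg hs]
    refine (((((hasDerivAt_neg' s).div_const ε).exp).const_sub 1).div_const 2).congr_deriv ?_
    field_simp

theorem hasDerivAt_morseAntideriv2 (hε : 0 < ε) (s : ℝ) :
    HasDerivAt (morseAntideriv2 ε) (morseAntideriv ε s) s := by
  refine hasDerivAt_of_eqOn_Iic_of_eqOn_Ici (a := 0)
    (g := fun s => -s / 2 + ε ^ 2 * (exp (s / ε) / (2 * ε)))
    (h := fun s => s / 2 + ε ^ 2 * (exp (-s / ε) / (2 * ε)))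
    (fun s hs => by simp only [morseAntideriv2, abs_of_nonpos (show s ≤ 0 from hs),
      morse_of_nonpos (show s ≤ 0 from hs)])
    (fun s hs => by simp only [morseAntideriv2, abs_of_nonneg (show 0 ≤ s from hs),
      morse_of_nonneg (show 0 ≤ s from hs)])
    (fun s hs => ?_) (fun s hs => ?_) s
  · rw [morseAntideriv_of_nonpos hε hs]
    refine (((hasDerivAt_neg' s).div_const 2).add
      ((((hasDerivAt_id' s).div_const ε).exp.div_const (2 * ε)).const_mul (ε ^ 2))).congr_deriv ?_
    field_simp
    ring
  · rw [morseAntideriv_of_nonneg hε hs]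
    refine (((hasDerivAt_id' s).div_const 2).add
      ((((hasDerivAt_neg' s).div_const ε).exp.div_const (2 * ε)).const_mul (ε ^ 2))).congr_deriv ?_
    field_simp
    ring

theorem continuous_morseAntideriv (hε : 0 < ε) : Continuous (morseAntideriv ε) :=
  continuous_iff_continuousAt.2 fun s => (hasDerivAt_morseAntideriv hε s).continuousAt

theorem integral_morse_sub (hε : 0 < ε) (y a b : ℝ) :
    ∫ z in a..b, Morse ε (y - z) = morseAntideriv ε (y - a) - morseAntideriv ε (y - b) := by
  rw [intervalIntegral.integral_comp_sub_left (Morse ε),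
    intervalIntegral.integral_eq_sub_of_hasDerivAt (fun s _ => hasDerivAt_morseAntideriv hε s)
      (continuous_morse.intervalIntegrable _ _)]

theorem integral_morseAntideriv_sub (hε : 0 < ε) (a b c : ℝ) :
    ∫ y in a..b, morseAntideriv ε (y - c) =
      morseAntideriv2 ε (b - c) - morseAntideriv2 ε (a - c) := by
  rw [intervalIntegral.integral_comp_sub_right (morseAntideriv ε),
    intervalIntegral.integral_eq_sub_of_hasDerivAt (fun s _ => hasDerivAt_morseAntideriv2 hε s)
      ((continuous_morseAntideriv hε).intervalIntegrable _ _)]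

theorem integral_morseAntideriv_sub_sub (hε : 0 < ε) (a b c d : ℝ) :
    ∫ y in a..b, (morseAntideriv ε (y - c) - morseAntideriv ε (y - d)) =
      mixedDiff (|·|) a b c d / 2 + ε ^ 2 * mixedDiff (Morse ε) a b c d := by
  have hG : ∀ c, IntervalIntegrable (fun y => morseAntideriv ε (y - c)) volume a b := fun c =>
    ((continuous_morseAntideriv hε).comp (continuous_sub_right c)).intervalIntegrable _ _
  rw [intervalIntegral.integral_sub (hG c) (hG d),
    integral_morseAntideriv_sub hε, integral_morseAntideriv_sub hε]
  simp only [morseAntideriv2, mixedDiff]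
  ring

/-- For `b ≤ c` all four arguments are nonpositive, where `W_ε` is a multiple of `exp (s / ε)`,
so the mixed difference factors into two increments of `exp`. -/
theorem mixedDiff_morse_nonneg (hε : 0 < ε) {a b c d : ℝ} (hab : a ≤ b) (hcd : c ≤ d)
    (h : b ≤ c ∨ d ≤ a) : 0 ≤ mixedDiff (Morse ε) a b c d := by
  wlog hbc : b ≤ c generalizing a b c d
  · rw [mixedDiff_comm morse_neg]
    exact this hcd hab (Or.inl (h.resolve_left hbc)) (h.resolve_left hbc)
  have key : mixedDiff (Morse ε) a b c d =
      (exp (b / ε) - exp (a / ε)) * (exp (-c / ε) - exp (-d / ε)) / (2 * ε) := by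
    simp only [mixedDiff, morse_of_nonpos (by linarith : b - c ≤ 0),
      morse_of_nonpos (by linarith : a - c ≤ 0), morse_of_nonpos (by linarith : b - d ≤ 0),
      morse_of_nonpos (by linarith : a - d ≤ 0), exp_sub_div]
    ring
  rw [key]
  refine div_nonneg (mul_nonneg ?_ ?_) (by positivity) <;> rw [sub_nonneg, exp_le_exp]
  · exact div_le_div_of_nonneg_right hab hε.le
  · exact div_le_div_of_nonneg_right (neg_le_neg hcd) hε.le

theorem mixedDiff_morse_nonpos (hε : 0 < ε) {a b c d : ℝ} (hca : c ≤ a) (hab : a ≤ b)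
    (hbd : b ≤ d) : mixedDiff (Morse ε) a b c d ≤ 0 := by
  have h1 := morse_le_morse hε (s := b - c) (t := a - c)
    (by rw [abs_of_nonneg (by linarith), abs_of_nonneg (by linarith)]; linarith)
  have h2 := morse_le_morse hε (s := a - d) (t := b - d)
    (by rw [abs_of_nonpos (by linarith), abs_of_nonpos (by linarith)]; linarith)
  simp only [mixedDiff]
  linarith

end Morse

section Configuration

variable {ε : ℝ} {N : ℕ} {ξ : ℕ → ℝ}

noncomputable def cellDens (N : ℕ) (ξ : ℕ → ℝ) (k : ℕ) : ℝ :=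
  1 / ((N : ℝ) * (ξ (k + 1) - ξ k))

noncomputable def stepDens (N : ℕ) (ξ : ℕ → ℝ) (y : ℝ) : ℝ :=
  ∑ k ∈ Finset.range N, (Ico (ξ k) (ξ (k + 1))).indicator (fun _ => cellDens N ξ k) y

theorem cellDens_mul_sub {k : ℕ} (hk : k < N) (hξ : ∀ i < N, ξ i < ξ (i + 1)) :
    cellDens N ξ k * (ξ (k + 1) - ξ k) = 1 / N := by
  have := sub_pos.2 (hξ k hk)
  rw [cellDens]
  field_simp

theorem monotoneOn_of_lt_succ (hξ : ∀ i < N, ξ i < ξ (i + 1)) : MonotoneOn ξ (Iic N) :=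
  (strictMonoOn_Iic_of_lt_succ (ψ := ξ) (by simpa using hξ)).monotoneOn

theorem succ_le_or_succ_le_of_ne (hξ : ∀ i < N, ξ i < ξ (i + 1)) {j k : ℕ} (hj : j < N)
    (hk : k < N) (hjk : j ≠ k) : ξ (k + 1) ≤ ξ j ∨ ξ (j + 1) ≤ ξ k := by
  have hmono := monotoneOn_of_lt_succ hξ
  rcases hjk.lt_or_gt with h | h
  · exact Or.inr (hmono (mem_Iic.2 (by omega)) (mem_Iic.2 hk.le) h)
  · exact Or.inl (hmono (mem_Iic.2 (by omega)) (mem_Iic.2 hj.le) h)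

theorem pairwiseDisjoint_Ico (hξ : ∀ i < N, ξ i < ξ (i + 1)) :
    ((Finset.range N : Finset ℕ) : Set ℕ).PairwiseDisjoint fun k => Ico (ξ k) (ξ (k + 1)) := by
  intro k hk j hj hkj
  rcases succ_le_or_succ_le_of_ne hξ (Finset.mem_range.1 hj) (Finset.mem_range.1 hk) hkj.symm
    with h | h
  · exact Ico_disjoint_Ico_same.mono_right (Ico_subset_Ico_left h)
  · exact (Ico_disjoint_Ico_same.mono_right (Ico_subset_Ico_left h)).symm

theorem integral_comp_stepDens (hξ : ∀ i < N, ξ i < ξ (i + 1)) (φ : ℝ → ℝ → ℝ)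
    (hφ : ∀ y, φ 0 y = 0) (hcont : ∀ k, Continuous (φ (cellDens N ξ k))) :
    ∫ y, φ (stepDens N ξ y) y =
      ∑ k ∈ Finset.range N, ∫ y in ξ k..ξ (k + 1), φ (cellDens N ξ k) y := by
  simp_rw [stepDens, apply_sum_indicator_of_pairwiseDisjoint (pairwiseDisjoint_Ico hξ) _ φ hφ]
  rw [integral_finsetSum _ fun k _ => ((hcont k).integrableOn_Icc.mono_set
    Ico_subset_Icc_self).integrable_indicator measurableSet_Ico]
  refine Finset.sum_congr rfl fun k hk => ?_
  rw [integral_indicator measurableSet_Ico, integral_Ico_eq_integral_Ioo,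
    ← integral_Ioc_eq_integral_Ioo,
    ← intervalIntegral.integral_of_le (hξ k (Finset.mem_range.1 hk)).le]

noncomputable def discEntropy (N : ℕ) (ξ : ℕ → ℝ) : ℝ :=
  -(1 / (N : ℝ)) * ∑ k ∈ Finset.range N, log ((N : ℝ) * (ξ (k + 1) - ξ k))

theorem integral_stepDens_mul_log (hξ : ∀ i < N, ξ i < ξ (i + 1)) :
    ∫ y, stepDens N ξ y * log (stepDens N ξ y) = discEntropy N ξ := by
  rw [integral_comp_stepDens hξ (fun c _ => c * log c) (by simp) fun k => continuous_const,
    discEntropy, Finset.mul_sum]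
  refine Finset.sum_congr rfl fun k hk => ?_
  rw [intervalIntegral.integral_const, smul_eq_mul, ← mul_assoc, mul_comm (ξ (k + 1) - ξ k),
    cellDens_mul_sub (Finset.mem_range.1 hk) hξ, cellDens, one_div ((N : ℝ) * _), log_inv]
  ring

noncomputable def morseMatrix (ε : ℝ) (ξ : ℕ → ℝ) (k j : ℕ) : ℝ :=
  mixedDiff (Morse ε) (ξ k) (ξ (k + 1)) (ξ j) (ξ (j + 1))

theorem morseMatrix_comm (ε : ℝ) (ξ : ℕ → ℝ) (k j : ℕ) :
    morseMatrix ε ξ k j = morseMatrix ε ξ j k :=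
  mixedDiff_comm morse_neg _ _ _ _

noncomputable def discDissipation (ε : ℝ) (N : ℕ) (ξ : ℕ → ℝ) : ℝ :=
  ∑ k ∈ Finset.range N, ∑ j ∈ Finset.range N,
    morseMatrix ε ξ k j * cellDens N ξ k * cellDens N ξ j

theorem conv_morse_stepDens (hε : 0 < ε) (hξ : ∀ i < N, ξ i < ξ (i + 1)) (y : ℝ) :
    conv (Morse ε) (stepDens N ξ) y = ∑ j ∈ Finset.range N,
      cellDens N ξ j * (morseAntideriv ε (y - ξ j) - morseAntideriv ε (y - ξ (j + 1))) := by
  refine (integral_comp_stepDens hξ (fun c z => Morse ε (y - z) * c) (by simp)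
    fun k => (continuous_morse.comp (continuous_sub_left y)).mul continuous_const).trans
    (Finset.sum_congr rfl fun j _ => ?_)
  rw [intervalIntegral.integral_mul_const, integral_morse_sub hε, mul_comm]

/-- `W_ε ∗ ρ = ρ + ε² W_ε'' ∗ ρ`, integrated over the cell `I_k`. -/
theorem integral_conv_morse_stepDens (hε : 0 < ε) (hξ : ∀ i < N, ξ i < ξ (i + 1)) {k : ℕ}
    (hk : k < N) :
    ∫ y in ξ k..ξ (k + 1), conv (Morse ε) (stepDens N ξ) y =
      (ξ (k + 1) - ξ k) * cellDens N ξ k +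
        ε ^ 2 * ∑ j ∈ Finset.range N, morseMatrix ε ξ k j * cellDens N ξ j := by
  have hG := continuous_morseAntideriv hε
  simp_rw [conv_morse_stepDens hε hξ]
  rw [intervalIntegral.integral_finsetSum fun j _ => by
    apply Continuous.intervalIntegrable; fun_prop]
  simp_rw [intervalIntegral.integral_const_mul, integral_morseAntideriv_sub_sub hε, mul_add,
    Finset.sum_add_distrib]
  congr 1
  · rw [Finset.sum_eq_single_of_mem k (Finset.mem_range.2 hk) fun j hj hjk => by
      rw [mixedDiff_abs_eq_zero (hξ k hk).le (hξ j (Finset.mem_range.1 hj)).le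
        (succ_le_or_succ_le_of_ne hξ (Finset.mem_range.1 hj) hk hjk), zero_div, mul_zero],
      mixedDiff_abs_self (hξ k hk).le]
    ring
  · rw [Finset.mul_sum]
    exact Finset.sum_congr rfl fun j _ => by rw [morseMatrix]; ring

theorem integral_stepDens_mul_conv_sub (hε : 0 < ε) (hξ : ∀ i < N, ξ i < ξ (i + 1)) :
    ∫ y, stepDens N ξ y * ((1 / ε ^ 2) * (conv (Morse ε) (stepDens N ξ) y - stepDens N ξ y)) =
      discDissipation ε N ξ := by
  have hconv : Continuous (conv (Morse ε) (stepDens N ξ)) := by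
    have hG := continuous_morseAntideriv hε
    rw [funext (conv_morse_stepDens hε hξ)]
    fun_prop
  rw [integral_comp_stepDens hξ
    (fun c y => c * ((1 / ε ^ 2) * (conv (Morse ε) (stepDens N ξ) y - c))) (by simp)
    fun k => by fun_prop]
  refine Finset.sum_congr rfl fun k hk => ?_
  rw [intervalIntegral.integral_const_mul, intervalIntegral.integral_const_mul,
    intervalIntegral.integral_sub (hconv.intervalIntegrable _ _) intervalIntegrable_const,
    intervalIntegral.integral_const, integral_conv_morse_stepDens hε hξ (Finset.mem_range.1 hk),
    smul_eq_mul, add_sub_cancel_left, ← mul_assoc (1 / ε ^ 2),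
    one_div_mul_cancel (pow_ne_zero 2 hε.ne'), one_mul, Finset.mul_sum]
  exact Finset.sum_congr rfl fun j _ => by ring

theorem discDissipation_nonpos (hε : 0 < ε) (hξ : ∀ i < N, ξ i < ξ (i + 1)) :
    discDissipation ε N ξ ≤ 0 := by
  refine sum_sum_mul_mul_nonpos _ _ (fun k _ j _ => morseMatrix_comm ε ξ k j)
    (fun k hk j hj hjk => ?_) (fun k hk => ?_)
  · rw [Finset.mem_range] at hk hj
    exact mixedDiff_morse_nonneg hε (hξ k hk).le (hξ j hj).le
      (succ_le_or_succ_le_of_ne hξ hj hk hjk)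
  · rw [Finset.mem_range] at hk
    have hmono := monotoneOn_of_lt_succ hξ
    exact (sum_range_mixedDiff _ _ _ ξ N).trans_le <| mixedDiff_morse_nonpos hε
      (hmono (mem_Iic.2 (Nat.zero_le N)) (mem_Iic.2 hk.le) (Nat.zero_le k)) (hξ k hk).le
      (hmono (mem_Iic.2 hk) (mem_Iic.2 le_rfl) hk)

theorem particleRHS_succ_sub (ε : ℝ) (N : ℕ) (ξ : ℕ → ℝ) (k : ℕ) :
    particleRHS ε N ξ (k + 1) - particleRHS ε N ξ k =
      -∑ j ∈ Finset.range N, morseMatrix ε ξ k j * cellDens N ξ j := by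
  rw [particleRHS, particleRHS, ← mul_sub, ← Finset.sum_sub_distrib, Finset.mul_sum,
    ← Finset.sum_neg_distrib]
  refine Finset.sum_congr rfl fun j _ => ?_
  rw [morseMatrix_comm, morseMatrix, mixedDiff]
  simp only [cellDens, one_div, mul_inv]
  ring

end Configuration

section ParticleSolution

variable {ε : ℝ} {N : ℕ} {x : ℝ → ℕ → ℝ}

theorem IsParticleSol.continuousOn (hx : IsParticleSol ε N x) {i : ℕ} (hi : i ≤ N) :
    ContinuousOn (fun t => x t i) (Ici 0) :=
  fun t ht => (hx.2 i hi t ht).continuousWithinAt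

theorem IsParticleSol.hasDerivWithinAt_discEntropy (hx : IsParticleSol ε N x) {t : ℝ}
    (ht : 0 ≤ t) :
    HasDerivWithinAt (fun s => discEntropy N (x s)) (discDissipation ε N (x t)) (Ici 0) t := by
  have hd : ∀ k < N, 0 < x t (k + 1) - x t k := fun k hk => sub_pos.2 (hx.1 t ht k hk)
  have hlog : ∀ k ∈ Finset.range N,
      HasDerivWithinAt (fun s => log (N * (x s (k + 1) - x s k)))
      (N * (particleRHS ε N (x t) (k + 1) - particleRHS ε N (x t) k) /
        (N * (x t (k + 1) - x t k))) (Ici 0) t := fun k hk => by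
    rw [Finset.mem_range] at hk
    exact (((hx.2 (k + 1) hk t ht).sub (hx.2 k hk.le t ht)).const_mul (N : ℝ)).log
      (mul_pos (Nat.cast_pos.2 (Nat.zero_lt_of_lt hk)) (hd k hk)).ne'
  refine ((HasDerivWithinAt.fun_sum hlog).const_mul _).congr_deriv ?_
  rw [Finset.mul_sum]
  refine Finset.sum_congr rfl fun k hk => ?_
  rw [Finset.mem_range] at hk
  have hN : (N : ℝ) ≠ 0 := Nat.cast_ne_zero.2 (Nat.ne_zero_of_lt hk)
  have := (hd k hk).ne'
  calc _ = (∑ j ∈ Finset.range N, morseMatrix ε (x t) k j * cellDens N (x t) j) *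
        cellDens N (x t) k := by
        rw [particleRHS_succ_sub, cellDens]
        field_simp
    _ = _ := by
        rw [Finset.sum_mul]
        exact Finset.sum_congr rfl fun j _ => by ring

theorem IsParticleSol.continuousOn_discDissipation (hx : IsParticleSol ε N x) :
    ContinuousOn (fun t => discDissipation ε N (x t)) (Ici 0) := by
  have hM : ∀ i ≤ N, ∀ l ≤ N, ContinuousOn (fun t => Morse ε (x t i - x t l)) (Ici 0) :=
    fun i hi l hl =>
      continuous_morse.comp_continuousOn ((hx.continuousOn hi).sub (hx.continuousOn hl))
  have hcell : ∀ k < N, ContinuousOn (fun t => cellDens N (x t) k) (Ici 0) := fun k hk =>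
    continuousOn_const.div (continuousOn_const.mul ((hx.continuousOn hk).sub
      (hx.continuousOn hk.le))) fun t ht => (mul_pos (Nat.cast_pos.2 (Nat.zero_lt_of_lt hk))
        (sub_pos.2 (hx.1 t ht k hk))).ne'
  have hB : ∀ k < N, ∀ j < N, ContinuousOn (fun t => morseMatrix ε (x t) k j) (Ici 0) :=
    fun k hk j hj => (((hM _ hk _ hj.le).sub (hM _ hk.le _ hj.le)).sub
      (hM _ hk _ hj)).add (hM _ hk.le _ hj)
  refine continuousOn_finsetSum _ fun k hk => continuousOn_finsetSum _ fun j hj => ?_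
  rw [Finset.mem_range] at hk hj
  exact ((hB k hk j hj).mul (hcell k hk)).mul (hcell j hj)

end ParticleSolution

theorem stmt9_general (ε : ℝ) (hε : 0 < ε) (N : ℕ) (x : ℝ → ℕ → ℝ)
    (hx : IsParticleSol ε N x) :
    ∀ t : ℝ, 0 ≤ t →
      ((∫ y, discDens N x y t * Real.log (discDens N x y t)) -
        ∫ τ in (0:ℝ)..t, ∫ y, discDens N x y τ *
          ((1 / ε ^ 2) *
            (conv (Morse ε) (fun z => discDens N x z τ) y - discDens N x y τ)) =
        ∫ y, discDens N x y 0 * Real.log (discDens N x y 0)) ∧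
      (∫ y, discDens N x y t * Real.log (discDens N x y t)) ≤
        ∫ y, discDens N x y 0 * Real.log (discDens N x y 0) := by
  intro t ht
  have hentropy : ∀ τ, 0 ≤ τ →
      ∫ y, discDens N x y τ * log (discDens N x y τ) = discEntropy N (x τ) :=
    fun τ hτ => integral_stepDens_mul_log (hx.1 τ hτ)
  have hdissipation : ∫ τ in (0:ℝ)..t, ∫ y, discDens N x y τ * ((1 / ε ^ 2) *
      (conv (Morse ε) (fun z => discDens N x z τ) y - discDens N x y τ)) =
        ∫ τ in (0:ℝ)..t, discDissipation ε N (x τ) :=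
    intervalIntegral.integral_congr fun τ hτ =>
      integral_stepDens_mul_conv_sub hε (hx.1 τ (by rw [uIcc_of_le ht] at hτ; exact hτ.1))
  have hftc : ∫ τ in (0:ℝ)..t, discDissipation ε N (x τ) =
      discEntropy N (x t) - discEntropy N (x 0) :=
    integral_eq_sub_of_hasDerivWithinAt_Ici ht (fun τ hτ => hx.hasDerivWithinAt_discEntropy hτ)
      hx.continuousOn_discDissipation
  have hdecay : ∫ τ in (0:ℝ)..t, discDissipation ε N (x τ) ≤ 0 := by
    simpa using intervalIntegral.integral_nonneg ht fun τ hτ =>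
      neg_nonneg.2 (discDissipation_nonpos hε (hx.1 τ hτ.1))
  rw [hentropy t ht, hentropy 0 le_rfl, hdissipation]
  constructor <;> linarith

/-- entropy identity and entropy dissipation.
For all `t ≥ 0`,
`∫ ρ^N log ρ^N (t) - ∫₀ᵗ ∫ ρ^N (1/ε²)(W_ε ∗ ρ^N - ρ^N) dx dτ = ∫ ρ^N log ρ^N (0)`,
and moreover `∫ ρ^N log ρ^N (t) ≤ ∫ ρ^N log ρ^N (0)`
(the integrand `ρ log ρ` vanishes where `ρ^N = 0`, consistently with `Real.log 0 = 0`). -/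
theorem stmt9 (ε : ℝ) (hε : 0 < ε) (N : ℕ) (hN : 1 ≤ N) (x : ℝ → ℕ → ℝ)
    (hx : IsParticleSol ε N x) :
    ∀ t : ℝ, 0 ≤ t →
      ((∫ y, discDens N x y t * Real.log (discDens N x y t)) -
        ∫ τ in (0:ℝ)..t, ∫ y, discDens N x y τ *
          ((1 / ε ^ 2) *
            (conv (Morse ε) (fun z => discDens N x z τ) y - discDens N x y τ)) =
        ∫ y, discDens N x y 0 * Real.log (discDens N x y 0)) ∧
      (∫ y, discDens N x y t * Real.log (discDens N x y t)) ≤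
        ∫ y, discDens N x y 0 * Real.log (discDens N x y 0) :=
  stmt9_general ε hε N x hx
end

section
/- Let N ≥ 1 be an integer, let ρ̃ : ℝ → [0,∞) be measurable with ∫_ℝ ρ̃ = 1, and let x̄_0 < x̄_1 < ⋯ < x̄_N be real numbers with supp ρ̃ ⊆ [x̄_0, x̄_N] and ∫_{x̄_i}^{x̄_{i+1}} ρ̃(y) dy = 1/N for every i = 0,…,N−1. Define ρ̄^N(x) = Σ_{i=0}^{N−1} (1/(N·(x̄_{i+1} − x̄_i)))·1_{[x̄_i, x̄_{i+1})}(x). Let L > 0 with x̄_0 < −L and x̄_N > L, and let φ ∈ C¹(ℝ) with supp φ ⊆ [−L, L]. Then | ∫_ℝ (ρ̄^N(x) − ρ̃(x))·φ(x) dx | ≤ (4·‖φ‖_{L^∞} + 2L·‖φ'‖_{L^∞}) / N. -/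
open MeasureTheory Real Set

/-!
On each cell the step density is the average of `ρ̃`, so `ρ̄ - ρ̃` has integral zero there and
`φ` may be replaced by `φ - φ(m)` for any point `m`, while `∫_cell |ρ̄ - ρ̃| ≤ 2/N`. Since `φ`
vanishes off `[-L, L]`, `φ = φ ∘ π` with `π` the projection onto `[-L, L]`; taking for `m` the
midpoint of `π([x̄_i, x̄_{i+1}])` bounds `|φ - φ(m)|` on the `i`-th cell by `‖φ'‖_∞` times half the
length of that image. These lengths telescope to `2L`, so the error is at most `2L‖φ'‖_∞/N`.
-/

theorem abs_integral_average_sub_mul_le {α : Type*} [MeasurableSpace α] {μ : Measure α}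
    [IsFiniteMeasure μ] {f φ : α → ℝ} {m M : ℝ} (hf : Integrable f μ)
    (hf₀ : 0 ≤ᵐ[μ] f) (hφ : AEStronglyMeasurable φ μ) (hφM : ∀ᵐ x ∂μ, |φ x - m| ≤ M) :
    |∫ x, (⨍ y, f y ∂μ - f x) * φ x ∂μ| ≤ 2 * M * ∫ x, f x ∂μ := by
  have hc : 0 ≤ ⨍ y, f y ∂μ := by
    rw [average_eq, smul_eq_mul]
    exact mul_nonneg (inv_nonneg.2 measureReal_nonneg) (integral_nonneg_of_ae hf₀)
  set c := ⨍ y, f y ∂μ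
  have hg : Integrable (fun x => c - f x) μ := (integrable_const c).sub hf
  have hgφ : Integrable (fun x => (c - f x) * (φ x - m)) μ :=
    hg.mul_bdd (hφ.sub aestronglyMeasurable_const) (hφM.mono fun x hx => by rwa [norm_eq_abs])
  have hshift : ∫ x, (c - f x) * φ x ∂μ = ∫ x, (c - f x) * (φ x - m) ∂μ := by
    have h : ∫ x, (c - f x) * φ x ∂μ
        = ∫ x, (c - f x) * (φ x - m) ∂μ + m * ∫ x, c - f x ∂μ := by
      rw [← integral_const_mul, ← integral_add hgφ (hg.const_mul m)]
      congr 1 with x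
      ring
    rw [h, integral_average_sub hf, mul_zero, add_zero]
  rw [hshift]
  calc |∫ x, (c - f x) * (φ x - m) ∂μ| ≤ ∫ x, (c + f x) * M ∂μ := by
        refine norm_integral_le_of_norm_le (f := fun x => (c - f x) * (φ x - m))
          (g := fun x => (c + f x) * M) (((integrable_const c).add hf).mul_const M) ?_
        filter_upwards [hf₀, hφM] with x hfx hφx
        rw [norm_eq_abs, abs_mul]
        have hfx' : 0 ≤ f x := hfx
        exact mul_le_mul (abs_le.2 ⟨by linarith, by linarith⟩) hφx (abs_nonneg _) (by linarith)
    _ = 2 * M * ∫ x, f x ∂μ := by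
        rw [integral_mul_const, integral_add (integrable_const c) hf, integral_average]
        ring

theorem Continuous.comp_projIcc_eq {φ : ℝ → ℝ} {a b : ℝ} (hab : a ≤ b) (hφ : Continuous φ)
    (hsupp : Function.support φ ⊆ Icc a b) (y : ℝ) : φ (projIcc a b hab y) = φ y := by
  have hsupp' : Function.support φ ⊆ Ioo a b := by
    rw [← interior_Icc]
    exact interior_maximal hsupp (isOpen_compl_singleton.preimage hφ)
  by_cases hy : y ∈ Icc a b
  · rw [projIcc_of_mem hab hy]
  have hend : (projIcc a b hab y : ℝ) ∉ Ioo a b := by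
    rcases not_and_or.1 hy with h | h
    · simp [projIcc_of_le_left hab (le_of_not_ge h)]
    · simp [projIcc_of_right_le hab (le_of_not_ge h)]
  rw [Function.notMem_support.1 fun h => hend (hsupp' h),
    Function.notMem_support.1 fun h => hy (hsupp h)]

theorem abs_sub_le_mul_abs_projIcc_sub {φ φ' : ℝ → ℝ} {a b C : ℝ} (hab : a ≤ b)
    (hφ : ∀ y, HasDerivAt φ (φ' y) y) (hC : ∀ y, |φ' y| ≤ C) (hsupp : Function.support φ ⊆ Icc a b)
    (y z : ℝ) : |φ y - φ z| ≤ C * |(projIcc a b hab y : ℝ) - z| := by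
  have hφc : Continuous φ := continuous_iff_continuousAt.2 fun y => (hφ y).continuousAt
  rw [← hφc.comp_projIcc_eq hab hsupp y]
  simpa only [norm_eq_abs] using convex_univ.norm_image_sub_le_of_norm_hasDerivWithin_le
    (fun x _ => (hφ x).hasDerivWithinAt) (fun x _ => (norm_eq_abs _).trans_le (hC x))
    (mem_univ z) (mem_univ (projIcc a b hab y : ℝ))

theorem abs_setIntegral_setAverage_sub_mul_le {ρ φ φ' : ℝ → ℝ} {a b C u v : ℝ} (hab : a ≤ b)
    (hρ : IntegrableOn ρ (Ioo u v)) (hρ₀ : ∀ y, 0 ≤ ρ y) (hφ : ∀ y, HasDerivAt φ (φ' y) y)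
    (hC : ∀ y, |φ' y| ≤ C) (hsupp : Function.support φ ⊆ Icc a b) :
    |∫ y in Ioo u v, ((⨍ z in Ioo u v, ρ z) - ρ y) * φ y| ≤
      C * (projIcc a b hab v - projIcc a b hab u : ℝ) * ∫ y in Ioo u v, ρ y := by
  set p : ℝ → ℝ := fun y => projIcc a b hab y
  have hφM : ∀ y ∈ Ioo u v, |φ y - φ ((p u + p v) / 2)| ≤ C * ((p v - p u) / 2) := by
    intro y hy
    have hlo : p u ≤ p y := monotone_projIcc hab hy.1.le
    have hhi : p y ≤ p v := monotone_projIcc hab hy.2.le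
    refine (abs_sub_le_mul_abs_projIcc_sub hab hφ hC hsupp _ _).trans ?_
    exact mul_le_mul_of_nonneg_left (abs_le.2 ⟨by linarith, by linarith⟩)
      ((abs_nonneg _).trans (hC 0))
  have hφc : Continuous φ := continuous_iff_continuousAt.2 fun y => (hφ y).continuousAt
  calc _ ≤ 2 * (C * ((p v - p u) / 2)) * ∫ y in Ioo u v, ρ y :=
        abs_integral_average_sub_mul_le hρ (ae_of_all _ hρ₀) hφc.aestronglyMeasurable
          (ae_restrict_of_forall_mem measurableSet_Ioo hφM)
    _ = _ := by ring

section Grid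

variable {N : ℕ} {x : ℕ → ℝ}

theorem monotoneOn_Iic_of_lt_add_one (hx : ∀ i < N, x i < x (i + 1)) : MonotoneOn x (Iic N) :=
  (strictMonoOn_Iic_of_lt_succ fun m hm => by simpa using hx m hm).monotoneOn

theorem sum_indicator_Ico_eq (hx : ∀ i < N, x i < x (i + 1)) (c : ℕ → ℝ) {i : ℕ} (hi : i < N)
    {y : ℝ} (hy : y ∈ Ico (x i) (x (i + 1))) :
    ∑ j ∈ Finset.range N, (Ico (x j) (x (j + 1))).indicator (fun _ => c j) y = c i := by
  have hmono := monotoneOn_Iic_of_lt_add_one hx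
  rw [Finset.sum_eq_single_of_mem i (Finset.mem_range.2 hi), indicator_of_mem hy]
  intro j hj hji
  have hj : j < N := Finset.mem_range.1 hj
  refine indicator_of_notMem (fun hyj => ?_) _
  rcases hji.lt_or_gt with h | h
  · have := hmono (mem_Iic.2 (by omega : j + 1 ≤ N)) (mem_Iic.2 hi.le) (by omega : j + 1 ≤ i)
    linarith [hyj.2, hy.1]
  · have := hmono (mem_Iic.2 (by omega : i + 1 ≤ N)) (mem_Iic.2 hj.le) (by omega : i + 1 ≤ j)
    linarith [hy.2, hyj.1]

theorem integral_eq_sum_setIntegral_Ioo (hx : ∀ i < N, x i < x (i + 1)) {f : ℝ → ℝ}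
    (hf : Integrable f) (hsupp : Function.support f ⊆ Icc (x 0) (x N)) :
    ∫ y, f y = ∑ i ∈ Finset.range N, ∫ y in Ioo (x i) (x (i + 1)), f y := by
  have h0N : x 0 ≤ x N :=
    monotoneOn_Iic_of_lt_add_one hx (mem_Iic.2 N.zero_le) (mem_Iic.2 le_rfl) N.zero_le
  rw [← setIntegral_eq_integral_of_forall_compl_eq_zero fun y hy =>
      Function.notMem_support.1 fun h => hy (hsupp h),
    integral_Icc_eq_integral_Ioc, ← intervalIntegral.integral_of_le h0N,
    ← intervalIntegral.sum_integral_adjacent_intervals fun i _ => hf.intervalIntegrable]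
  refine Finset.sum_congr rfl fun i hi => ?_
  rw [intervalIntegral.integral_of_le (hx i (Finset.mem_range.1 hi)).le,
    integral_Ioc_eq_integral_Ioo]

theorem integral_sum_indicator_Ico_sub_mul (hx : ∀ i < N, x i < x (i + 1)) (c : ℕ → ℝ)
    {ρ φ : ℝ → ℝ} {C : ℝ} (hρ : Integrable ρ) (hφ : AEStronglyMeasurable φ)
    (hφC : ∀ y, |φ y| ≤ C) (hsupp : Function.support φ ⊆ Icc (x 0) (x N)) :
    ∫ y, ((∑ j ∈ Finset.range N, (Ico (x j) (x (j + 1))).indicator (fun _ => c j) y) - ρ y) * φ y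
      = ∑ i ∈ Finset.range N, ∫ y in Ioo (x i) (x (i + 1)), (c i - ρ y) * φ y := by
  have hstep : Integrable fun y =>
      ∑ j ∈ Finset.range N, (Ico (x j) (x (j + 1))).indicator (fun _ => c j) y :=
    integrable_finsetSum _ fun j _ =>
      (integrable_indicator_iff measurableSet_Ico).2 (integrableOn_const measure_Ico_lt_top.ne)
  rw [integral_eq_sum_setIntegral_Ioo hx ?_ ((Function.support_mul_subset_right _ _).trans hsupp)]
  · refine Finset.sum_congr rfl fun i hi => setIntegral_congr_fun measurableSet_Ioo fun y hy => ?_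
    rw [sum_indicator_Ico_eq hx c (Finset.mem_range.1 hi) (Ioo_subset_Ico_self hy)]
  · exact (hstep.sub hρ).mul_bdd hφ (ae_of_all _ fun y => (norm_eq_abs _).trans_le (hφC y))

end Grid

theorem stmt12_general (N : ℕ) (ρ : ℝ → ℝ)
    (hnn : ∀ y, 0 ≤ ρ y) (hint : MeasureTheory.Integrable ρ)
    (xb : ℕ → ℝ) (hord : ∀ i < N, xb i < xb (i + 1))
    (hcell : ∀ i < N, (∫ y in (xb i)..(xb (i + 1)), ρ y) = 1 / N)
    (L : ℝ) (hL : 0 < L) (hL0 : xb 0 < -L) (hLN : L < xb N)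
    (φ φ' : ℝ → ℝ) (Cφ Cφ' : ℝ)
    (hφ : ∀ y, HasDerivAt φ (φ' y) y)
    (hφsupp : Function.support φ ⊆ Set.Icc (-L) L)
    (hCφ : ∀ y, |φ y| ≤ Cφ) (hCφ' : ∀ y, |φ' y| ≤ Cφ') :
    |∫ y, ((∑ i ∈ Finset.range N,
        Set.indicator (Set.Ico (xb i) (xb (i + 1)))
          (fun _ => 1 / ((N : ℝ) * (xb (i + 1) - xb i))) y) - ρ y) * φ y| ≤
      (4 * Cφ + 2 * L * Cφ') / N := by
  have hLL : -L ≤ L := by linarith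
  set p : ℝ → ℝ := fun y => projIcc (-L) L hLL y
  have hmass : ∀ i < N, ∫ y in Ioo (xb i) (xb (i + 1)), ρ y = 1 / N := fun i hi => by
    rw [← integral_Ioc_eq_integral_Ioo, ← intervalIntegral.integral_of_le (hord i hi).le,
      hcell i hi]
  have havg : ∀ i < N, 1 / ((N : ℝ) * (xb (i + 1) - xb i)) = ⨍ y in Ioo (xb i) (xb (i + 1)), ρ y :=
    fun i hi => by
      rw [setAverage_eq, Real.volume_real_Ioo_of_le (hord i hi).le, hmass i hi, smul_eq_mul]
      field_simp
  have hφc : Continuous φ := continuous_iff_continuousAt.2 fun y => (hφ y).continuousAt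
  rw [integral_sum_indicator_Ico_sub_mul hord _ hint hφc.aestronglyMeasurable hCφ
    (hφsupp.trans (Icc_subset_Icc hL0.le hLN.le))]
  calc _ ≤ ∑ i ∈ Finset.range N,
          |∫ y in Ioo (xb i) (xb (i + 1)), (1 / ((N : ℝ) * (xb (i + 1) - xb i)) - ρ y) * φ y| :=
        Finset.abs_sum_le_sum_abs _ _
    _ ≤ ∑ i ∈ Finset.range N, Cφ' * (p (xb (i + 1)) - p (xb i)) * (1 / N) :=
        Finset.sum_le_sum fun i hi => by
          rw [havg i (Finset.mem_range.1 hi), ← hmass i (Finset.mem_range.1 hi)]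
          exact abs_setIntegral_setAverage_sub_mul_le hLL hint.integrableOn hnn hφ hCφ' hφsupp
    _ = 2 * L * Cφ' / N := by
        rw [← Finset.sum_mul, ← Finset.mul_sum, Finset.sum_range_sub (fun i => p (xb i))]
        simp only [p, projIcc_of_right_le hLL hLN.le, projIcc_of_le_left hLL hL0.le]
        ring
    _ ≤ (4 * Cφ + 2 * L * Cφ') / N := by
        gcongr
        linarith [(abs_nonneg _).trans (hCφ 0)]

/-- weak consistency of the atomisation. For a compactly supported
probability density `ρ̃` atomised by grid points `x̄_0 < ⋯ < x̄_N` carrying mass `1/N`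
per cell, and a `C¹` test function `φ` supported in `[-L,L] ⊂ (x̄_0, x̄_N)`,
`|∫ (ρ̄^N - ρ̃) φ| ≤ (4‖φ‖_∞ + 2L‖φ'‖_∞)/N`. -/
theorem stmt12 (N : ℕ) (hN : 1 ≤ N) (ρ : ℝ → ℝ) (hmeas : Measurable ρ)
    (hnn : ∀ y, 0 ≤ ρ y) (hint : MeasureTheory.Integrable ρ) (hmass : (∫ y, ρ y) = 1)
    (xb : ℕ → ℝ) (hord : ∀ i < N, xb i < xb (i + 1))
    (hsupp : Function.support ρ ⊆ Set.Icc (xb 0) (xb N))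
    (hcell : ∀ i < N, (∫ y in (xb i)..(xb (i + 1)), ρ y) = 1 / N)
    (L : ℝ) (hL : 0 < L) (hL0 : xb 0 < -L) (hLN : L < xb N)
    (φ φ' : ℝ → ℝ) (Cφ Cφ' : ℝ)
    (hφ : ∀ y, HasDerivAt φ (φ' y) y) (hφ'c : Continuous φ')
    (hφsupp : Function.support φ ⊆ Set.Icc (-L) L)
    (hCφ : ∀ y, |φ y| ≤ Cφ) (hCφ' : ∀ y, |φ' y| ≤ Cφ') :
    |∫ y, ((∑ i ∈ Finset.range N,
        Set.indicator (Set.Ico (xb i) (xb (i + 1)))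
          (fun _ => 1 / ((N : ℝ) * (xb (i + 1) - xb i))) y) - ρ y) * φ y| ≤
      (4 * Cφ + 2 * L * Cφ') / N :=
  stmt12_general N ρ hnn hint xb hord hcell L hL hL0 hLN φ φ' Cφ Cφ' hφ hφsupp hCφ hCφ'
end
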